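/- Trivialization when system and catalyst free states share the smallest eigenvalue: if F_S = {γ_S} and F_C = {γ_C} are singletons of full-rank states whose smallest eigenvalues are both λ₁, then for every pair of states ρ_S, σ_S there is an RNG channel Λ: S⊗C → S⊗C (with respect to the maximal composition) and a catalyst state ψ_C such that Λ(ρ_S ⊗ ψ_C) = σ_S ⊗ ψ_C. -/

import Mathlib

/-!
Measure the catalyst with the projector `ψ` onto a `λ`-eigenvector of `γ_C`. On outcome `ψ`
prepare `σ_S ⊗ ψ`, otherwise prepare `ω_S ⊗ ζ_C` with `ω_S = (γ_S - λ σ_S)/(1 - λ)` and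
`ζ_C = (γ_C - λ ψ)/(1 - λ)`; these are states because `γ ≥ λ·1` and every state is `≤ 1`.
An input whose catalyst marginal is `γ_C` yields `ψ` with probability `Tr[ψ γ_C] = λ`, so the
output `λ σ_S ⊗ ψ + (1 - λ) ω_S ⊗ ζ_C` has marginals `γ_S` and `γ_C`. On `ρ_S ⊗ ψ` the outcome
is `ψ` with certainty, so the output is `σ_S ⊗ ψ`.
-/

open Matrix Kronecker ComplexOrder

noncomputable section

namespace QIT

/-- Partial trace over the first tensor factor. -/
def trFst {A B : Type*} [Fintype A] (M : Matrix (A × B) (A × B) ℂ) : Matrix B B ℂ :=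
  Matrix.of fun b b' => ∑ a, M (a, b) (a, b')

/-- Partial trace over the second tensor factor. -/
def trSnd {A B : Type*} [Fintype B] (M : Matrix (A × B) (A × B) ℂ) : Matrix A A ℂ :=
  Matrix.of fun a a' => ∑ b, M (a, b) (a', b)

/-- A density matrix: positive semidefinite with unit trace. -/
def IsDensity {A : Type*} [Fintype A] (M : Matrix A A ℂ) : Prop :=
  M.PosSemidef ∧ M.trace = 1

/-- The trace norm ‖M‖₁ = Tr √(MᴴM). -/
def traceNorm {A : Type*} [Fintype A] [DecidableEq A] (M : Matrix A A ℂ) : ℝ :=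
  ((Matrix.IsHermitian.eigenvectorUnitary (Matrix.posSemidef_conjTranspose_mul_self M).1 :
      Matrix A A ℂ) *
    Matrix.diagonal (fun i =>
      ((Real.sqrt ((Matrix.posSemidef_conjTranspose_mul_self M).1.eigenvalues i) : ℝ) : ℂ)) *
    (star (Matrix.IsHermitian.eigenvectorUnitary (Matrix.posSemidef_conjTranspose_mul_self M).1) :
      Matrix A A ℂ)).trace.re

/-- The extension `id_{Fin k} ⊗ B` of a map on matrices. -/
def extFun {C D : Type*} (B : Matrix C C ℂ → Matrix D D ℂ) (k : ℕ)
    (M : Matrix (Fin k × C) (Fin k × C) ℂ) : Matrix (Fin k × D) (Fin k × D) ℂ :=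
  Matrix.of fun p q => B (Matrix.of fun c c' => M (p.1, c) (q.1, c')) p.2 q.2

/-- Complete positivity: every extension by an identity preserves positive semidefiniteness. -/
def IsCP {C D : Type*} [Fintype C] [Fintype D] (B : Matrix C C ℂ → Matrix D D ℂ) : Prop :=
  ∀ (k : ℕ) (M : Matrix (Fin k × C) (Fin k × C) ℂ), M.PosSemidef → (extFun B k M).PosSemidef

/-- Trace preservation. -/
def IsTP {C D : Type*} [Fintype C] [Fintype D] (B : Matrix C C ℂ → Matrix D D ℂ) : Prop :=
  ∀ M, (B M).trace = M.trace

/-- A quantum channel: linear, trace-preserving, completely positive. -/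
def IsChannel {C D : Type*} [Fintype C] [Fintype D] (B : Matrix C C ℂ → Matrix D D ℂ) : Prop :=
  IsLinearMap ℂ B ∧ IsTP B ∧ IsCP B

/-- Minimal composition of two free-state sets. -/
def minComp {A B : Type*} (FA : Set (Matrix A A ℂ)) (FB : Set (Matrix B B ℂ)) :
    Set (Matrix (A × B) (A × B) ℂ) :=
  convexHull ℝ {M | ∃ a ∈ FA, ∃ b ∈ FB, M = a ⊗ₖ b}

/-- Maximal composition of two free-state sets: both marginals are free. -/
def maxComp {A B : Type*} [Fintype A] [Fintype B]
    (FA : Set (Matrix A A ℂ)) (FB : Set (Matrix B B ℂ)) :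
    Set (Matrix (A × B) (A × B) ℂ) :=
  {M | trSnd M ∈ FA ∧ trFst M ∈ FB}

/-- Separability: convex combination of products of density matrices. -/
def Separable {A B : Type*} [Fintype A] [Fintype B] (M : Matrix (A × B) (A × B) ℂ) : Prop :=
  M ∈ convexHull ℝ {X | ∃ ξ ζ, IsDensity ξ ∧ IsDensity ζ ∧ X = ξ ⊗ₖ ζ}

/-- Matrix logarithm of a Hermitian matrix via the spectral decomposition. -/
def mlog {A : Type*} [Fintype A] [DecidableEq A] (M : Matrix A A ℂ) : Matrix A A ℂ :=
  if h : M.IsHermitian then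
    (Matrix.IsHermitian.eigenvectorUnitary h : Matrix A A ℂ) *
      Matrix.diagonal (fun i => (Real.log (h.eigenvalues i) : ℂ)) *
      (star (Matrix.IsHermitian.eigenvectorUnitary h) : Matrix A A ℂ)
  else 0

/-- Umegaki relative entropy D(ρ‖σ) = Tr[ρ(log ρ − log σ)]. -/
def relEnt {A : Type*} [Fintype A] [DecidableEq A] (ρ σ : Matrix A A ℂ) : ℝ :=
  ((ρ * (mlog ρ - mlog σ)).trace).re

/-- Reversed relative entropy of resource R̃(ρ) = inf_{γ free} D(γ‖ρ). -/
def revRelEntRes {A : Type*} [Fintype A] [DecidableEq A]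
    (F : Set (Matrix A A ℂ)) (ρ : Matrix A A ℂ) : ℝ :=
  sInf {x | ∃ γ ∈ F, x = relEnt γ ρ}

/-- Max-relative entropy of resource. -/
def Dmax {A : Type*} [Fintype A] (ρ : Matrix A A ℂ) (F : Set (Matrix A A ℂ)) : ℝ :=
  sInf {x | ∃ r : ℝ, ∃ ω ∈ F, x = Real.log r ∧ (r • ω - ρ).PosSemidef}


/-- The extension `Λ ⊗ id_R` of a map on matrices, acting on the first factor. -/
def extFunR {A A' R : Type*} (Λ : Matrix A A ℂ → Matrix A' A' ℂ)
    (M : Matrix (A × R) (A × R) ℂ) : Matrix (A' × R) (A' × R) ℂ :=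
  Matrix.of fun p q => Λ (Matrix.of fun a a' => M (a, p.2) (a', q.2)) p.1 q.1

open scoped MatrixOrder

section Spectrum

variable {n : Type*} [Fintype n] [DecidableEq n] {A : Matrix n n ℂ}

theorem _root_.Matrix.IsHermitian.sub_smul_one_posSemidef (hA : A.IsHermitian) {c : ℝ}
    (h : ∀ (μ : ℝ) (w : n → ℂ), w ≠ 0 → A *ᵥ w = (μ : ℂ) • w → c ≤ μ) :
    (A - (c : ℂ) • 1).PosSemidef := by
  rw [← Matrix.le_iff, Complex.coe_smul, ← Algebra.algebraMap_eq_smul_one,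
    algebraMap_le_iff_le_spectrum hA.isSelfAdjoint, hA.spectrum_real_eq_range_eigenvalues]
  rintro _ ⟨i, rfl⟩
  refine h _ (hA.eigenvectorBasis i) ?_ ?_
  · simpa using hA.eigenvectorBasis.orthonormal.ne_zero i
  · rw [hA.mulVec_eigenvectorBasis, Complex.coe_smul]

theorem _root_.Matrix.PosSemidef.eigenvalues_le_trace (hA : A.PosSemidef) (i : n) :
    hA.1.eigenvalues i ≤ A.trace.re := by
  rw [hA.1.trace_eq_sum_eigenvalues]
  simpa using Finset.single_le_sum (fun j _ => hA.eigenvalues_nonneg j) (Finset.mem_univ i)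

theorem IsDensity.one_sub_posSemidef {σ : Matrix n n ℂ} (hσ : IsDensity σ) :
    (1 - σ).PosSemidef := by
  rw [← Matrix.le_iff, ← map_one (algebraMap ℝ (Matrix n n ℂ)),
    le_algebraMap_iff_spectrum_le hσ.1.1.isSelfAdjoint, hσ.1.1.spectrum_real_eq_range_eigenvalues]
  rintro _ ⟨i, rfl⟩
  simpa [hσ.2] using hσ.1.eigenvalues_le_trace i

end Spectrum

section PartialTrace

variable {A B : Type*}

@[simp]
theorem trFst_add [Fintype A] (M N : Matrix (A × B) (A × B) ℂ) :
    trFst (M + N) = trFst M + trFst N := by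
  ext; simp [trFst, Finset.sum_add_distrib]

@[simp]
theorem trFst_smul [Fintype A] (c : ℂ) (M : Matrix (A × B) (A × B) ℂ) :
    trFst (c • M) = c • trFst M := by
  ext; simp [trFst, Finset.mul_sum]

@[simp]
theorem trFst_kronecker [Fintype A] (X : Matrix A A ℂ) (Y : Matrix B B ℂ) :
    trFst (X ⊗ₖ Y) = X.trace • Y := by
  ext; simp [trFst, Matrix.trace, Finset.sum_mul]

@[simp]
theorem trSnd_add [Fintype B] (M N : Matrix (A × B) (A × B) ℂ) :
    trSnd (M + N) = trSnd M + trSnd N := by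
  ext; simp [trSnd, Finset.sum_add_distrib]

@[simp]
theorem trSnd_smul [Fintype B] (c : ℂ) (M : Matrix (A × B) (A × B) ℂ) :
    trSnd (c • M) = c • trSnd M := by
  ext; simp [trSnd, Finset.mul_sum]

@[simp]
theorem trSnd_kronecker [Fintype B] (X : Matrix A A ℂ) (Y : Matrix B B ℂ) :
    trSnd (X ⊗ₖ Y) = Y.trace • X := by
  ext; simp [trSnd, Matrix.trace, Finset.mul_sum, mul_comm]

theorem trace_trFst [Fintype A] [Fintype B] (M : Matrix (A × B) (A × B) ℂ) :
    (trFst M).trace = M.trace := by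
  simp [trFst, Matrix.trace, Fintype.sum_prod_type, Finset.sum_comm (γ := A)]

theorem trace_one_kronecker_mul [Fintype A] [DecidableEq A] [Fintype B] (E : Matrix B B ℂ)
    (M : Matrix (A × B) (A × B) ℂ) :
    ((1 ⊗ₖ E) * M).trace = (E * trFst M).trace := by
  simp [Matrix.trace, Matrix.mul_apply, trFst, Fintype.sum_prod_type, Matrix.one_apply,
    Finset.mul_sum, Finset.sum_comm (γ := A)]

theorem posSemidef_trSnd [Fintype B] {M : Matrix (A × B) (A × B) ℂ} (hM : M.PosSemidef) :
    (trSnd M).PosSemidef := by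
  have : trSnd M = ∑ b, M.submatrix (·, b) (·, b) := by ext; simp [trSnd, Matrix.sum_apply]
  exact this ▸ posSemidef_sum _ fun b _ => hM.submatrix _

end PartialTrace

section MeasurePrepare

variable {I A B : Type*}

def block (M : Matrix (I × A) (I × A) ℂ) (i j : I) : Matrix A A ℂ :=
  Matrix.of fun a b => M (i, a) (j, b)

theorem block_one_kronecker_mul_mul [Fintype I] [DecidableEq I] [Fintype A]
    (X Y : Matrix A A ℂ) (M : Matrix (I × A) (I × A) ℂ) (i j : I) :
    block ((1 ⊗ₖ X) * M * (1 ⊗ₖ Y)) i j = X * block M i j * Y := by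
  ext a b
  simp [block, Matrix.mul_apply, Fintype.sum_prod_type, Matrix.one_apply, Finset.sum_mul]

theorem posSemidef_trace_mul_block [Fintype I] [DecidableEq I] [Fintype A] [DecidableEq A]
    {E : Matrix A A ℂ} (hE : E.PosSemidef) {M : Matrix (I × A) (I × A) ℂ} (hM : M.PosSemidef) :
    (Matrix.of fun i j => (E * block M i j).trace).PosSemidef := by
  obtain ⟨X, rfl⟩ := CStarAlgebra.nonneg_iff_eq_star_mul_self.mp hE.nonneg
  have hconj : (Matrix.of fun i j => (star X * X * block M i j).trace) =
      trSnd ((1 ⊗ₖ X) * M * (1 ⊗ₖ X)ᴴ) := by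
    ext i j
    rw [conjTranspose_kronecker, conjTranspose_one]
    change _ = (block ((1 ⊗ₖ X) * M * (1 ⊗ₖ Xᴴ)) i j).trace
    rw [block_one_kronecker_mul_mul, Matrix.of_apply, Matrix.trace_mul_cycle X,
      star_eq_conjTranspose]
  exact hconj ▸ posSemidef_trSnd (hM.mul_mul_conjTranspose_same _)

def measurePrepare [Fintype A] [DecidableEq A] (P : Matrix A A ℂ) (τ₀ τ₁ : Matrix B B ℂ)
    (X : Matrix A A ℂ) : Matrix B B ℂ :=
  (P * X).trace • τ₀ + ((1 - P) * X).trace • τ₁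

theorem isChannel_measurePrepare [Fintype A] [DecidableEq A] [Fintype B] {P : Matrix A A ℂ}
    {τ₀ τ₁ : Matrix B B ℂ} (hP : P.PosSemidef) (hP' : (1 - P).PosSemidef)
    (hτ₀ : IsDensity τ₀) (hτ₁ : IsDensity τ₁) : IsChannel (measurePrepare P τ₀ τ₁) := by
  refine ⟨⟨fun X Y => ?_, fun c X => ?_⟩, fun X => ?_, fun k M hM => ?_⟩
  · simp only [measurePrepare, Matrix.mul_add, trace_add, add_smul]
    abel
  · simp only [measurePrepare, Matrix.mul_smul, trace_smul, smul_add, smul_assoc]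
  · simp [measurePrepare, hτ₀.2, hτ₁.2, Matrix.sub_mul]
  · have hext : extFun (measurePrepare P τ₀ τ₁) k M =
        (Matrix.of fun i j => (P * block M i j).trace) ⊗ₖ τ₀ +
          (Matrix.of fun i j => ((1 - P) * block M i j).trace) ⊗ₖ τ₁ := by
      ext; rfl
    rw [hext]
    exact ((posSemidef_trace_mul_block hP hM).kronecker hτ₀.1).add
      ((posSemidef_trace_mul_block hP' hM).kronecker hτ₁.1)

theorem measurePrepare_eq [Fintype A] [DecidableEq A] {P X : Matrix A A ℂ} {p : ℂ}
    (hX : X.trace = 1) (hp : (P * X).trace = p) (τ₀ τ₁ : Matrix B B ℂ) :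
    measurePrepare P τ₀ τ₁ X = p • τ₀ + (1 - p) • τ₁ := by
  rw [measurePrepare, Matrix.sub_mul, one_mul, trace_sub, hX, hp]

end MeasurePrepare

section States

variable {n m : Type*} [Fintype n]

theorem IsDensity.kronecker [Fintype m] {ρ : Matrix n n ℂ} {σ : Matrix m m ℂ} (hρ : IsDensity ρ)
    (hσ : IsDensity σ) : IsDensity (ρ ⊗ₖ σ) :=
  ⟨hρ.1.kronecker hσ.1, by rw [trace_kronecker, hρ.2, hσ.2, mul_one]⟩

theorem _root_.IsStarProjection.kronecker [Fintype m] {p : Matrix n n ℂ} {q : Matrix m m ℂ}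
    (hp : IsStarProjection p) (hq : IsStarProjection q) : IsStarProjection (p ⊗ₖ q) where
  isIdempotentElem := by
    rw [IsIdempotentElem, ← mul_kronecker_mul, hp.isIdempotentElem.eq, hq.isIdempotentElem.eq]
  isSelfAdjoint := by
    rw [IsSelfAdjoint, star_eq_conjTranspose, conjTranspose_kronecker, ← star_eq_conjTranspose,
      ← star_eq_conjTranspose, hp.isSelfAdjoint.star_eq, hq.isSelfAdjoint.star_eq]

def rankOneProj (v : n → ℂ) : Matrix n n ℂ :=
  (star v ⬝ᵥ v)⁻¹ • vecMulVec v (star v)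

variable {v : n → ℂ}

theorem isStarProjection_rankOneProj (hv : v ≠ 0) : IsStarProjection (rankOneProj v) where
  isIdempotentElem := by
    have hv' : star v ⬝ᵥ v ≠ 0 := dotProduct_star_self_eq_zero.not.mpr hv
    rw [IsIdempotentElem, rankOneProj, smul_mul_smul, vecMulVec_mul_vecMulVec, vecMulVec_smul,
      smul_smul, mul_assoc, inv_mul_cancel₀ hv', mul_one]
  isSelfAdjoint := by
    rw [IsSelfAdjoint, rankOneProj, star_smul, star_inv₀, star_eq_conjTranspose,
      conjTranspose_vecMulVec, star_star, ← star_dotProduct]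

theorem trace_rankOneProj (hv : v ≠ 0) : (rankOneProj v).trace = 1 := by
  rw [rankOneProj, trace_smul, trace_vecMulVec, dotProduct_comm v, smul_eq_mul,
    inv_mul_cancel₀ (dotProduct_star_self_eq_zero.not.mpr hv)]

theorem isDensity_rankOneProj (hv : v ≠ 0) : IsDensity (rankOneProj v) :=
  ⟨nonneg_iff_posSemidef.mp (isStarProjection_rankOneProj hv).nonneg, trace_rankOneProj hv⟩

theorem mul_rankOneProj_of_mulVec_eq_smul {A : Matrix n n ℂ} {c : ℂ} (h : A *ᵥ v = c • v) :
    A * rankOneProj v = c • rankOneProj v := by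
  rw [rankOneProj, Matrix.mul_smul, mul_vecMulVec, h, smul_vecMulVec, smul_comm]

end States

section Residual

variable {n : Type*}

def residual (lam : ℝ) (γ σ : Matrix n n ℂ) : Matrix n n ℂ :=
  (1 - (lam : ℂ))⁻¹ • (γ - (lam : ℂ) • σ)

theorem smul_add_one_sub_smul_residual {lam : ℝ} (hlam : lam ≠ 1) (γ σ : Matrix n n ℂ) :
    (lam : ℂ) • σ + (1 - (lam : ℂ)) • residual lam γ σ = γ := by
  have hlam' : 1 - (lam : ℂ) ≠ 0 := sub_ne_zero.mpr (mod_cast hlam.symm)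
  rw [residual, smul_smul, mul_inv_cancel₀ hlam', one_smul, add_sub_cancel]

theorem isDensity_residual [Fintype n] [DecidableEq n] {lam : ℝ} (hlam0 : 0 ≤ lam)
    (hlam1 : lam < 1) {γ σ : Matrix n n ℂ} (hγ : γ.trace = 1)
    (hγlam : (γ - (lam : ℂ) • 1).PosSemidef) (hσ : IsDensity σ) :
    IsDensity (residual lam γ σ) := by
  have hlam' : 1 - (lam : ℂ) ≠ 0 := sub_ne_zero.mpr (mod_cast hlam1.ne')
  have hcoef : (0 : ℂ) ≤ (1 - (lam : ℂ))⁻¹ := by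
    rw [← Complex.ofReal_one, ← Complex.ofReal_sub, ← Complex.ofReal_inv]
    exact mod_cast inv_nonneg.mpr (sub_nonneg.mpr hlam1.le)
  have hdecomp : γ - (lam : ℂ) • σ = (γ - (lam : ℂ) • 1) + (lam : ℂ) • (1 - σ) := by
    rw [smul_sub]
    abel
  refine ⟨?_, ?_⟩
  · rw [residual, hdecomp]
    exact (hγlam.add (hσ.one_sub_posSemidef.smul (mod_cast hlam0))).smul hcoef
  · rw [residual, trace_smul, trace_sub, trace_smul, hγ, hσ.2, smul_eq_mul, smul_eq_mul, mul_one,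
      inv_mul_cancel₀ hlam']

end Residual

theorem shared_smallest_eigenvalue_trivialization_general
    {S C : Type*} [Fintype S] [Fintype C]
    (γS : Matrix S S ℂ) (hγSdens : IsDensity γS)
    (γC : Matrix C C ℂ) (hγCdens : IsDensity γC)
    (lam : ℝ) (hlam0 : 0 < lam) (hlam1 : lam < 1)
    (hminS : ∀ (μ : ℝ) (w : S → ℂ), w ≠ 0 → γS *ᵥ w = (μ : ℂ) • w → lam ≤ μ)
    (hEigC : ∃ v : C → ℂ, v ≠ 0 ∧ γC *ᵥ v = (lam : ℂ) • v)
    (hminC : ∀ (μ : ℝ) (w : C → ℂ), w ≠ 0 → γC *ᵥ w = (μ : ℂ) • w → lam ≤ μ) :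
    ∀ (ρS σS : Matrix S S ℂ), IsDensity ρS → IsDensity σS →
      ∃ (Λ : Matrix (S × C) (S × C) ℂ → Matrix (S × C) (S × C) ℂ)
        (ψ : Matrix C C ℂ),
        IsChannel Λ ∧ IsDensity ψ ∧
        (∀ M : Matrix (S × C) (S × C) ℂ, IsDensity M →
          trSnd M = γS → trFst M = γC → trSnd (Λ M) = γS ∧ trFst (Λ M) = γC) ∧
        Λ (ρS ⊗ₖ ψ) = σS ⊗ₖ ψ := by
  classical
  intro ρS σS hρS hσS
  obtain ⟨v, hv0, hv⟩ := hEigC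
  set ψ := rankOneProj v
  have hψ : IsDensity ψ := isDensity_rankOneProj hv0
  have hP : IsStarProjection ((1 : Matrix S S ℂ) ⊗ₖ ψ) :=
    (IsStarProjection.one _).kronecker (isStarProjection_rankOneProj hv0)
  have hω := isDensity_residual hlam0.le hlam1 hγSdens.2
    (hγSdens.1.1.sub_smul_one_posSemidef hminS) hσS
  have hζ := isDensity_residual hlam0.le hlam1 hγCdens.2
    (hγCdens.1.1.sub_smul_one_posSemidef hminC) hψ
  refine ⟨measurePrepare (1 ⊗ₖ ψ) (σS ⊗ₖ ψ) (residual lam γS σS ⊗ₖ residual lam γC ψ), ψ,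
    isChannel_measurePrepare (nonneg_iff_posSemidef.mp hP.nonneg)
      (nonneg_iff_posSemidef.mp hP.one_sub_nonneg) (hσS.kronecker hψ) (hω.kronecker hζ),
    hψ, fun M _ _ hM => ?_, ?_⟩
  · have htr : M.trace = 1 := by rw [← trace_trFst, hM, hγCdens.2]
    have hp : ((1 ⊗ₖ ψ) * M).trace = (lam : ℂ) := by
      rw [trace_one_kronecker_mul, hM, trace_mul_comm, mul_rankOneProj_of_mulVec_eq_smul hv,
        trace_smul, hψ.2, smul_eq_mul, mul_one]
    rw [measurePrepare_eq htr hp]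
    simp only [trSnd_add, trSnd_smul, trSnd_kronecker, trFst_add, trFst_smul, trFst_kronecker,
      hψ.2, hσS.2, hω.2, hζ.2, one_smul]
    exact ⟨smul_add_one_sub_smul_residual hlam1.ne _ _,
      smul_add_one_sub_smul_residual hlam1.ne _ _⟩
  · have hp : ((1 ⊗ₖ ψ) * (ρS ⊗ₖ ψ)).trace = 1 := by
      rw [← mul_kronecker_mul, one_mul, (isStarProjection_rankOneProj hv0).isIdempotentElem.eq]
      exact (hρS.kronecker hψ).2
    rw [measurePrepare_eq (hρS.kronecker hψ).2 hp, sub_self, zero_smul, one_smul, add_zero]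

/-- trivialization when the singleton free states of system and catalyst
share the same smallest eigenvalue `λ₁`: every state transformation `ρ_S → σ_S` is
achieved by an RNG channel (w.r.t. the maximal composition) together with a catalyst. -/
theorem shared_smallest_eigenvalue_trivialization
    {S C : Type*} [Fintype S] [DecidableEq S] [Fintype C] [DecidableEq C]
    (γS : Matrix S S ℂ) (hγSdens : IsDensity γS) (hγSpd : γS.PosDef)
    (γC : Matrix C C ℂ) (hγCdens : IsDensity γC) (hγCpd : γC.PosDef)
    (lam : ℝ) (hlam0 : 0 < lam) (hlam1 : lam < 1)
    (hEigS : ∃ v : S → ℂ, v ≠ 0 ∧ γS *ᵥ v = (lam : ℂ) • v)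
    (hminS : ∀ (μ : ℝ) (w : S → ℂ), w ≠ 0 → γS *ᵥ w = (μ : ℂ) • w → lam ≤ μ)
    (hEigC : ∃ v : C → ℂ, v ≠ 0 ∧ γC *ᵥ v = (lam : ℂ) • v)
    (hminC : ∀ (μ : ℝ) (w : C → ℂ), w ≠ 0 → γC *ᵥ w = (μ : ℂ) • w → lam ≤ μ) :
    ∀ (ρS σS : Matrix S S ℂ), IsDensity ρS → IsDensity σS →
      ∃ (Λ : Matrix (S × C) (S × C) ℂ → Matrix (S × C) (S × C) ℂ)
        (ψ : Matrix C C ℂ),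
        IsChannel Λ ∧ IsDensity ψ ∧
        (∀ M : Matrix (S × C) (S × C) ℂ, IsDensity M →
          trSnd M = γS → trFst M = γC → trSnd (Λ M) = γS ∧ trFst (Λ M) = γC) ∧
        Λ (ρS ⊗ₖ ψ) = σS ⊗ₖ ψ :=
  shared_smallest_eigenvalue_trivialization_general γS hγSdens γC hγCdens lam hlam0 hlam1 hminS
    hEigC hminC

end QIT
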